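/- Let C be a tensor code of dimension k in 𝔽 and let j ∈ {2,…,k}. If C is minimally j-TBMD with respect to 𝒜^R, then C is not (j−1)-TMRD with respect to 𝒜^R. -/

import Mathlib

open Module Function

namespace TensorPaper

variable {F : Type*} [Field F] [Fintype F]

/-- The tensor space `𝔽 = 𝔽_q^{n₁} ⊗ ⋯ ⊗ 𝔽_q^{n_r}`, identified with `r`-dimensional arrays. -/
abbrev TSpace (F : Type*) {r : ℕ} (n : Fin r → ℕ) : Type _ := (∀ i, Fin (n i)) → F

/-- The dual code with respect to the standard bilinear form `X*Y = ∑ X_m Y_m`. -/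
def dualCode {ι : Type*} [Fintype ι] (C : Submodule F (ι → F)) : Submodule F (ι → F) where
  carrier := { X | ∀ Y ∈ C, ∑ m, X m * Y m = 0 }
  add_mem' := by
    intro a b ha hb Y hY
    have h1 := ha Y hY
    have h2 := hb Y hY
    simp only [Pi.add_apply, add_mul]
    rw [Finset.sum_add_distrib, h1, h2, add_zero]
  zero_mem' := by
    intro Y _
    simp
  smul_mem' := by
    intro c a ha Y hY
    have h1 := ha Y hY
    simp only [Pi.smul_apply, smul_eq_mul, mul_assoc]
    rw [← Finset.mul_sum, h1, mul_zero]

/-- The array corresponding to a simple (rank-one) tensor `x⁽¹⁾ ⊗ ⋯ ⊗ x⁽ʳ⁾`. -/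
def simpleTensor {r : ℕ} (n : Fin r → ℕ) (x : ∀ i, Fin (n i) → F) : TSpace F n :=
  fun m => ∏ i, x i (m i)

/-- The closure-type anticode `A⁽¹⁾ ⊗ ⋯ ⊗ A⁽ʳ⁾`: the span of all simple tensors whose
`i`-th factor lies in `U i`. -/
def closureAnticode {r : ℕ} (n : Fin r → ℕ) (U : ∀ i, Submodule F (Fin (n i) → F)) :
    Submodule F (TSpace F n) :=
  Submodule.span F { X | ∃ x : ∀ i, Fin (n i) → F, (∀ i, x i ∈ U i) ∧ X = simpleTensor n x }

/-- The family `𝒜^cl` of closure-type anticodes. -/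
def ClosureAnticodes {r : ℕ} (n : Fin r → ℕ) : Set (Submodule F (TSpace F n)) :=
  { A | ∃ U : ∀ i, Submodule F (Fin (n i) → F), A = closureAnticode n U }

/-- The family `𝒜^R` of Ravagnani-type anticodes:
`𝔽^{n₁} ⊗ ⋯ ⊗ A^{(i)} ⊗ ⋯ ⊗ 𝔽^{n_r}` with `n_i = n₁`. -/
def RavagnaniAnticodes {r : ℕ} (n : Fin (r + 2) → ℕ) : Set (Submodule F (TSpace F n)) :=
  { A | ∃ (i : Fin (r + 2)) (U : Submodule F (Fin (n i) → F)),
      n i = n 0 ∧ A = closureAnticode n (Function.update (fun s => ⊤) i U) }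

/-- The family `𝒜^D` of Delsarte-type anticodes:
`𝔽^{n₁} ⊗ ⋯ ⊗ A^{(i)} ⊗ ⋯ ⊗ 𝔽^{n_r}` with `i ≠ p` for some `p` with `n_p = n_r`. -/
def DelsarteAnticodes {r : ℕ} (n : Fin (r + 2) → ℕ) : Set (Submodule F (TSpace F n)) :=
  { A | ∃ (p i : Fin (r + 2)), n p = n (Fin.last (r + 1)) ∧ i ≠ p ∧
      ∃ U : Submodule F (Fin (n i) → F),
        A = closureAnticode n (Function.update (fun s => ⊤) i U) }

/-- The `j`-th tensor weight `t_j^R` of `C` with respect to `𝒜^R`, with the convention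
`t^R({0}) = n + n/n₁`. -/
noncomputable def tR {r : ℕ} (n : Fin (r + 2) → ℕ) (j : ℕ) (C : Submodule F (TSpace F n)) : ℕ := by
  classical exact
    if C = ⊥ then (∏ i, n i) + (∏ i, n i) / n 0
    else sInf { a | ∃ A ∈ RavagnaniAnticodes n, j ≤ finrank F ↥(C ⊓ A) ∧ finrank F ↥A = a }

/-- The `j`-th tensor weight `t_j^D` of `C` with respect to `𝒜^D`. -/
noncomputable def tD {r : ℕ} (n : Fin (r + 2) → ℕ) (j : ℕ) (C : Submodule F (TSpace F n)) : ℕ :=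
  sInf { a | ∃ A ∈ DelsarteAnticodes n, j ≤ finrank F ↥(C ⊓ A) ∧ finrank F ↥A = a }

/-- The `j`-th tensor weight `t_j^cl` of `C` with respect to `𝒜^cl`. -/
noncomputable def tCl {r : ℕ} (n : Fin r → ℕ) (j : ℕ) (C : Submodule F (TSpace F n)) : ℕ :=
  sInf { a | ∃ A ∈ ClosureAnticodes n, j ≤ finrank F ↥(C ⊓ A) ∧ finrank F ↥A = a }

/-- The `j`-th dual tensor weight `s_j^cl` of `C` with respect to the dual anticodes
`𝒜̄^cl = {A^⊥ : A ∈ 𝒜^cl}`. -/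
noncomputable def sCl {r : ℕ} (n : Fin r → ℕ) (j : ℕ) (C : Submodule F (TSpace F n)) : ℕ :=
  sInf { a | ∃ A ∈ ClosureAnticodes n,
    j ≤ finrank F ↥(C ⊓ dualCode A) ∧ finrank F ↥(dualCode A) = a }

/-- `C` is `j`-TMRD with respect to `𝒜^R`: `t_j^R(C) = n − (n/n₁)⌊(n₁/n)(k−j)⌋`. -/
def isTMRD {r : ℕ} (n : Fin (r + 2) → ℕ) (j : ℕ) (C : Submodule F (TSpace F n)) : Prop :=
  tR n j C = (∏ i, n i) - ((∏ i, n i) / n 0) * (n 0 * (finrank F ↥C - j) / ∏ i, n i)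

/-- `C` is `j`-TBMD with respect to `𝒜^R`: `n − t_j^R(C) − t₁^R(C^⊥) < 0`. -/
def isTBMD {r : ℕ} (n : Fin (r + 2) → ℕ) (j : ℕ) (C : Submodule F (TSpace F n)) : Prop :=
  ((∏ i, n i : ℕ) : ℤ) - tR n j C - tR n 1 (dualCode C) < 0

/-- The Gaussian binomial coefficient `[a choose b]_q`, equal to `0` if `a < b`. -/
noncomputable def qBinom (q : ℕ) (a : ℤ) (b : ℕ) : ℚ :=
  if a < (b : ℤ) then 0
  else ∏ i ∈ Finset.range b, ((q : ℚ) ^ (a - i).toNat - 1) / ((q : ℚ) ^ (i + 1) - 1)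

/-- The `(a,j)`-th tensor binomial moment of `C` with respect to `𝒜^R`. -/
noncomputable def BR {r : ℕ} (n : Fin (r + 2) → ℕ) (j : ℕ) (C : Submodule F (TSpace F n))
    (a : ℕ) : ℚ :=
  ∑ᶠ A ∈ (RavagnaniAnticodes n ∩ {A | finrank F ↥A = a}),
    qBinom (Fintype.card F) (finrank F ↥(C ⊓ A)) j

/-- The `(a,j)`-th entry of the weight distribution of `C` with respect to `𝒜^R`. -/
noncomputable def WR {r : ℕ} (n : Fin (r + 2) → ℕ) (j : ℕ) (C : Submodule F (TSpace F n))
    (a : ℕ) : ℚ :=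
  ∑ᶠ A ∈ (RavagnaniAnticodes n ∩ {A | finrank F ↥A = a}),
    (Nat.card {D : Submodule F (TSpace F n) //
      D ≤ C ⊓ A ∧ finrank F ↥D = j ∧
      ∀ B ∈ RavagnaniAnticodes n, D ≤ B → B ≤ A → B = A} : ℚ)

/-- The `(a,j)`-th tensor binomial moment of `C` with respect to `𝒜^D`. -/
noncomputable def BD {r : ℕ} (n : Fin (r + 2) → ℕ) (j : ℕ) (C : Submodule F (TSpace F n))
    (a : ℕ) : ℚ :=
  ∑ᶠ A ∈ (DelsarteAnticodes n ∩ {A | finrank F ↥A = a}),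
    qBinom (Fintype.card F) (finrank F ↥(C ⊓ A)) j

/-- The `(a,j)`-th entry of the weight distribution of `C` with respect to `𝒜^D`. -/
noncomputable def WD {r : ℕ} (n : Fin (r + 2) → ℕ) (j : ℕ) (C : Submodule F (TSpace F n))
    (a : ℕ) : ℚ :=
  ∑ᶠ A ∈ (DelsarteAnticodes n ∩ {A | finrank F ↥A = a}),
    (Nat.card {D : Submodule F (TSpace F n) //
      D ≤ C ⊓ A ∧ finrank F ↥D = j ∧
      ∀ B ∈ DelsarteAnticodes n, D ≤ B → B ≤ A → B = A} : ℚ)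

/-- The `(a,j)`-th normalized tensor binomial moment of `C` with respect to `𝒜^R`. -/
noncomputable def bR {r : ℕ} (n : Fin (r + 2) → ℕ) (j : ℕ) (C : Submodule F (TSpace F n))
    (a : ℤ) : ℚ :=
  if a < 0 then 0
  else if a ≤ ((∏ i, n i : ℕ) : ℤ) - tR n j C - tR n 1 (dualCode C) then
    BR n j C (a.toNat + tR n j C) /
      ((RavagnaniAnticodes (F := F) n ∩ {A | finrank F ↥A = a.toNat + tR n j C}).ncard : ℚ)
  else if ((∏ i, n i : ℕ) : ℤ) ∣ a * n 0 then
    qBinom (Fintype.card F) ((finrank F ↥C : ℤ) + a + tR n j C - (∏ i, n i : ℕ)) j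
  else 0

/-- The `j`-th tensor zeta function of `C` with respect to `𝒜^R`. -/
noncomputable def ZR {r : ℕ} (n : Fin (r + 2) → ℕ) (j : ℕ) (C : Submodule F (TSpace F n)) :
    PowerSeries ℚ :=
  PowerSeries.mk fun a => bR n j C (a : ℤ)

/-- The `q`-Bernstein polynomial `𝓑_{b,a}(X,Y;q)`. -/
noncomputable def qBernstein {R : Type*} [CommRing R] [Algebra ℚ R] (q : ℕ) (b a : ℕ)
    (X Y : R) : R :=
  algebraMap ℚ R (qBinom q (b : ℤ) a) * Y ^ a *
    ∏ c ∈ Finset.range (b - a), (X - (q : R) ^ c * Y)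

/-- The closure-type anticodes with dimension distribution `𝔞`. -/
def closureAnticodesOf {r : ℕ} (n : Fin r → ℕ) (𝔞 : Fin r → ℕ) :
    Set (Submodule F (TSpace F n)) :=
  { A | ∃ U : ∀ i, Submodule F (Fin (n i) → F),
      (∀ i, finrank F ↥(U i) = 𝔞 i) ∧ A = closureAnticode n U }

/-- The refined tensor binomial moment `B_𝔞^{(cl,j)}(C)`. -/
noncomputable def BCl {r : ℕ} (n : Fin r → ℕ) (j : ℕ) (C : Submodule F (TSpace F n))
    (𝔞 : Fin r → ℕ) : ℚ :=
  ∑ᶠ A ∈ closureAnticodesOf n 𝔞, qBinom (Fintype.card F) (finrank F ↥(C ⊓ A)) j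

/-- The refined weight distribution `W_𝔞^{(cl,j)}(C)`. -/
noncomputable def WCl {r : ℕ} (n : Fin r → ℕ) (j : ℕ) (C : Submodule F (TSpace F n))
    (𝔞 : Fin r → ℕ) : ℚ :=
  ∑ᶠ A ∈ closureAnticodesOf n 𝔞,
    (Nat.card {D : Submodule F (TSpace F n) //
      D ≤ C ⊓ A ∧ finrank F ↥D = j ∧
      ∀ B ∈ ClosureAnticodes n, D ≤ B → B ≤ A → B = A} : ℚ)

/-- The refined tensor binomial moment `B_𝔞^{(D,j)}(C)` for Delsarte-type anticodes. -/
noncomputable def BDref {r : ℕ} (n : Fin (r + 2) → ℕ) (j : ℕ) (C : Submodule F (TSpace F n))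
    (𝔞 : Fin (r + 2) → ℕ) : ℚ :=
  ∑ᶠ A ∈ (DelsarteAnticodes n ∩ closureAnticodesOf n 𝔞),
    qBinom (Fintype.card F) (finrank F ↥(C ⊓ A)) j

/-- The refined tensor binomial moment `B_𝔞^{(R,j)}(C)` for Ravagnani-type anticodes. -/
noncomputable def BRref {r : ℕ} (n : Fin (r + 2) → ℕ) (j : ℕ) (C : Submodule F (TSpace F n))
    (𝔞 : Fin (r + 2) → ℕ) : ℚ :=
  ∑ᶠ A ∈ (RavagnaniAnticodes n ∩ closureAnticodesOf n 𝔞),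
    qBinom (Fintype.card F) (finrank F ↥(C ⊓ A)) j

/-- The power series `P(T^m)` obtained from a polynomial `P` by substituting `T^m`. -/
noncomputable def substPow (P : Polynomial ℚ) (m : ℕ) : PowerSeries ℚ :=
  ∑ i ∈ Finset.range (P.natDegree + 1), PowerSeries.C (P.coeff i) * PowerSeries.X ^ (m * i)


-- main development
set_option linter.unusedSectionVars false

-- AUX START
/-- The bilinear pairing. -/
noncomputable def bform {ι : Type*} [Fintype ι] : (ι → F) →ₗ[F] (ι → F) →ₗ[F] F :=
  LinearMap.mk₂ F (fun X Y => ∑ m, X m * Y m)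
    (fun X X' Y => by simp [add_mul, Finset.sum_add_distrib])
    (fun c X Y => by simp [Finset.mul_sum, mul_assoc])
    (fun X Y Y' => by simp [mul_add, Finset.sum_add_distrib])
    (fun c X Y => by simp [Finset.mul_sum, mul_left_comm])

lemma bform_apply {ι : Type*} [Fintype ι] (X Y : ι → F) : bform X Y = ∑ m, X m * Y m := rfl

lemma mem_dualCode {ι : Type*} [Fintype ι] {C : Submodule F (ι → F)} {X : ι → F} :
    X ∈ dualCode C ↔ ∀ Y ∈ C, ∑ m, X m * Y m = 0 := Iff.rfl

lemma finrank_dualCode {ι : Type*} [Fintype ι] (U : Submodule F (ι → F)) :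
    finrank F (dualCode U) = Fintype.card ι - finrank F U := by
  classical
  set b : Basis ι F (ι → F) := Pi.basisFun F ι with hb
  have key : ∀ X Y : ι → F, b.toDual X Y = ∑ m, X m * Y m := by
    intro X Y
    have hY : ∑ m, Y m • b m = Y := by
      simpa [Pi.basisFun_repr, hb] using b.sum_repr Y
    conv_lhs => rw [← hY]
    rw [map_sum]
    rw [Finset.sum_congr rfl (fun m _ => by rw [map_smul, Basis.toDual_apply_left])]
    simp [Pi.basisFun_repr, hb, mul_comm]
  have hset : dualCode U = Submodule.comap b.toDualEquiv.toLinearMap U.dualAnnihilator := by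
    ext X
    simp only [mem_dualCode, Submodule.mem_comap, Submodule.mem_dualAnnihilator]
    constructor
    · intro hX Y hY
      show b.toDual X Y = 0
      rw [key]; exact hX Y hY
    · intro hX Y hY
      rw [← key]; exact hX Y hY
  rw [hset, Submodule.comap_equiv_eq_map_symm, LinearEquiv.finrank_map_eq]
  have h1 : finrank F ((ι → F) ⧸ U) = finrank F U.dualAnnihilator :=
    (Subspace.quotEquivAnnihilator U).finrank_eq
  have h2 := Submodule.finrank_quotient_add_finrank U
  have h3 : finrank F (ι → F) = Fintype.card ι := Module.finrank_pi F
  omega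

lemma prod_split {β : Type*} [CommMonoid β] {k : ℕ} (i : Fin k) (f : Fin k → β) :
    ∏ s, f s = f i * ∏ s : {s : Fin k // s ≠ i}, f s.1 := by
  rw [← Finset.mul_prod_erase Finset.univ f (Finset.mem_univ i)]
  congr 1
  exact Finset.prod_subtype (Finset.univ.erase i) (fun x => by simp [Finset.mem_erase]) _

def idxEquiv {r : ℕ} (n : Fin r → ℕ) (i : Fin r) :
    (∀ s, Fin (n s)) ≃ (∀ s : {s : Fin r // s ≠ i}, Fin (n s.1)) × Fin (n i) where
  toFun m := (fun s => m s.1, m i)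
  invFun p s := if h : s = i then Fin.cast (congrArg n h).symm p.2 else p.1 ⟨s, h⟩
  left_inv m := by
    funext s
    by_cases h : s = i
    · subst h; simp
    · simp [h]
  right_inv p := by
    refine Prod.ext ?_ ?_
    · funext s
      simp [s.2]
    · simp

lemma idxEquiv_symm_ne {r : ℕ} (n : Fin r → ℕ) (i : Fin r)
    (p : (∀ s : {s : Fin r // s ≠ i}, Fin (n s.1)) × Fin (n i)) (s : {s : Fin r // s ≠ i}) :
    (idxEquiv n i).symm p s.1 = p.1 s := by
  simp [idxEquiv, s.2]

lemma idxEquiv_symm_self {r : ℕ} (n : Fin r → ℕ) (i : Fin r)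
    (p : (∀ s : {s : Fin r // s ≠ i}, Fin (n s.1)) × Fin (n i)) :
    (idxEquiv n i).symm p i = p.2 := by
  simp [idxEquiv]

noncomputable def sliceEquiv {r : ℕ} (n : Fin r → ℕ) (i : Fin r) :
    ((∀ s, Fin (n s)) → F) ≃ₗ[F]
      ((∀ s : {s : Fin r // s ≠ i}, Fin (n s.1)) → (Fin (n i) → F)) :=
  Equiv.toLinearEquiv
    ((Equiv.arrowCongr (idxEquiv n i) (Equiv.refl F)).trans (Equiv.curry _ _ _))
    { map_add := fun X Y => rfl
      map_smul := fun c X => rfl }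

lemma sliceEquiv_apply {r : ℕ} (n : Fin r → ℕ) (i : Fin r) (X : (∀ s, Fin (n s)) → F)
    (m' : ∀ s : {s : Fin r // s ≠ i}, Fin (n s.1)) (t : Fin (n i)) :
    sliceEquiv n i X m' t = X ((idxEquiv n i).symm (m', t)) := rfl

lemma sliceEquiv_symm_apply {r : ℕ} (n : Fin r → ℕ) (i : Fin r)
    (Y : (∀ s : {s : Fin r // s ≠ i}, Fin (n s.1)) → (Fin (n i) → F))
    (m : ∀ s, Fin (n s)) :
    (sliceEquiv n i).symm Y m = Y (fun s => m s.1) (m i) := rfl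

lemma map_closureAnticode {r : ℕ} (n : Fin r → ℕ) (i : Fin r)
    (U : Submodule F (Fin (n i) → F)) :
    Submodule.map (sliceEquiv (F := F) n i).toLinearMap
      (closureAnticode n (Function.update (fun _ => ⊤) i U))
      = Submodule.pi Set.univ (fun _ => U) := by
  classical
  apply le_antisymm
  · rw [closureAnticode, Submodule.map_span, Submodule.span_le]
    rintro Y ⟨X, ⟨x, hx, rfl⟩, rfl⟩
    rw [SetLike.mem_coe, Submodule.mem_pi]
    intro m' _
    show (sliceEquiv (F := F) n i) (simpleTensor n x) m' ∈ U
    have key : (sliceEquiv (F := F) n i) (simpleTensor n x) m'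
        = (∏ s : {s : Fin r // s ≠ i}, x s.1 (m' s)) • x i := by
      funext t
      rw [sliceEquiv_apply]
      show (∏ s, x s ((idxEquiv n i).symm (m', t) s)) = _
      rw [prod_split i]
      rw [idxEquiv_symm_self]
      rw [Finset.prod_congr rfl (fun s _ => by rw [idxEquiv_symm_ne n i (m', t) s])]
      simp [mul_comm]
    rw [key]
    have hxi : x i ∈ U := by simpa using hx i
    exact U.smul_mem _ hxi
  · intro Y hY
    rw [Submodule.mem_pi] at hY
    rw [Submodule.mem_map]
    refine ⟨(sliceEquiv (F := F) n i).symm Y, ?_, by simp⟩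
    rw [closureAnticode]
    set xm : (∀ s : {s : Fin r // s ≠ i}, Fin (n s.1)) → ∀ s, Fin (n s) → F :=
      fun m' s t => if h : s = i then Y m' (Fin.cast (congrArg n h) t)
        else if m' ⟨s, h⟩ = t then 1 else 0 with hxm
    have hsum : (sliceEquiv (F := F) n i).symm Y
        = ∑ m', simpleTensor n (xm m') := by
      funext m
      rw [sliceEquiv_symm_apply]
      simp only [Finset.sum_apply]
      rw [Finset.sum_eq_single (fun s : {s : Fin r // s ≠ i} => m s.1)]
      · show _ = ∏ s, xm _ s (m s)
        rw [prod_split i]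
        have h1 : xm (fun s => m s.1) i (m i) = Y (fun s => m s.1) (m i) := by
          simp [hxm]
        have h2 : ∀ s : {s : Fin r // s ≠ i}, xm (fun s => m s.1) s.1 (m s.1) = 1 := by
          intro s
          simp [hxm, s.2]
        rw [h1, Finset.prod_congr rfl (fun s _ => h2 s)]
        simp
      · intro m' _ hne
        have : ∃ s : {s : Fin r // s ≠ i}, m' s ≠ m s.1 := by
          by_contra hc
          push_neg at hc
          exact hne (funext hc)
        obtain ⟨s, hs⟩ := this
        apply Finset.prod_eq_zero (Finset.mem_univ s.1)
        have : xm m' s.1 (m s.1) = if m' ⟨s.1, s.2⟩ = m s.1 then 1 else 0 := by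
          simp [hxm, s.2]
        rw [this, if_neg (by simpa using hs)]
      · intro h
        exact absurd (Finset.mem_univ _) h
    rw [hsum]
    apply Submodule.sum_mem
    intro m' _
    apply Submodule.subset_span
    refine ⟨xm m', fun s => ?_, rfl⟩
    by_cases h : s = i
    · subst h
      have : xm m' s = Y m' := by
        funext t
        simp [hxm]
      rw [this]
      simpa using hY m' trivial
    · simp [Function.update_of_ne h]

lemma finrank_pi_submodule {κ M : Type*} [Fintype κ] [AddCommGroup M] [Module F M]
    [FiniteDimensional F M] (U : Submodule F M) :
    finrank F (Submodule.pi (Set.univ : Set κ) (fun _ => U)) = Fintype.card κ * finrank F U := by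
  have e : (Submodule.pi (Set.univ : Set κ) (fun _ => U)) ≃ₗ[F] (κ → U) :=
    { toFun := fun x k => ⟨x.1 k, x.2 k trivial⟩
      invFun := fun y => ⟨fun k => y k, fun k _ => (y k).2⟩
      map_add' := fun x y => rfl
      map_smul' := fun c x => rfl
      left_inv := fun x => rfl
      right_inv := fun y => rfl }
  rw [e.finrank_eq, Module.finrank_pi_fintype, Finset.sum_const, Finset.card_univ, smul_eq_mul]

lemma finrank_closureAnticode {r : ℕ} (n : Fin r → ℕ) (i : Fin r)
    (U : Submodule F (Fin (n i) → F)) :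
    finrank F (closureAnticode n (Function.update (fun _ => ⊤) i U))
      = (∏ s ∈ Finset.univ.erase i, n s) * finrank F U := by
  rw [← LinearEquiv.finrank_map_eq (sliceEquiv (F := F) n i), map_closureAnticode,
    finrank_pi_submodule]
  congr 1
  rw [Fintype.card_pi]
  simp only [Fintype.card_fin]
  exact (Finset.prod_subtype (Finset.univ.erase i)
    (fun x => by simp [Finset.mem_erase]) n).symm

lemma closureAnticode_top {r : ℕ} (n : Fin r → ℕ) (i : Fin r) :
    closureAnticode (F := F) n (Function.update (fun _ => ⊤) i ⊤) = ⊤ := by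
  refine Submodule.map_injective_of_injective
    (f := (sliceEquiv (F := F) n i).toLinearMap) (sliceEquiv (F := F) n i).injective ?_
  rw [map_closureAnticode, Submodule.pi_top, Submodule.map_top]
  rw [LinearEquiv.range]

lemma pairing_simpleTensor {r : ℕ} (n : Fin r → ℕ) (x y : ∀ s, Fin (n s) → F) :
    ∑ m : (∀ s, Fin (n s)), simpleTensor n x m * simpleTensor n y m
      = ∏ s, ∑ t, x s t * y s t := by
  classical
  have h1 : ∀ m : (∀ s, Fin (n s)), simpleTensor n x m * simpleTensor n y m
      = ∏ s, (x s (m s) * y s (m s)) := by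
    intro m
    rw [simpleTensor, simpleTensor, Finset.prod_mul_distrib]
  rw [Finset.sum_congr rfl (fun m _ => h1 m)]
  rw [Finset.prod_univ_sum]
  rw [Fintype.piFinset_univ]

lemma closureAnticode_orth {r : ℕ} (n : Fin r → ℕ) (i : Fin r)
    (U V : Submodule F (Fin (n i) → F))
    (h : ∀ u ∈ U, ∀ v ∈ V, ∑ t, u t * v t = 0) :
    ∀ X ∈ closureAnticode n (Function.update (fun _ => ⊤) i U),
      ∀ Y ∈ closureAnticode n (Function.update (fun _ => ⊤) i V),
        ∑ m, X m * Y m = 0 := by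
  have main : closureAnticode n (Function.update (fun _ => ⊤) i U)
      ≤ dualCode (closureAnticode n (Function.update (fun _ => ⊤) i V)) := by
    rw [closureAnticode, Submodule.span_le]
    rintro X ⟨x, hx, rfl⟩
    rw [SetLike.mem_coe, mem_dualCode]
    have h2 : closureAnticode n (Function.update (fun _ => ⊤) i V)
        ≤ LinearMap.ker (bform (simpleTensor n x)) := by
      rw [closureAnticode, Submodule.span_le]
      rintro Y ⟨y, hy, rfl⟩
      rw [SetLike.mem_coe, LinearMap.mem_ker]
      rw [bform_apply, pairing_simpleTensor]
      apply Finset.prod_eq_zero (Finset.mem_univ i)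
      exact h _ (by simpa using hx i) _ (by simpa using hy i)
    intro Y hY
    exact h2 hY
  exact fun X hX Y hY => main hX Y hY


theorem stmt8_main {F : Type*} [Field F] [Fintype F] (r : ℕ) (n : Fin (r + 2) → ℕ)
    (hn1 : 2 ≤ n 0) (hmin : ∀ i, n 0 ≤ n i) (hmax : ∀ i, n i ≤ n (Fin.last (r + 1)))
    (C : Submodule F (TSpace F n)) (j : ℕ) (hj2 : 2 ≤ j) (hjk : j ≤ finrank F ↥C)
    (hTB : isTBMD n j C)
    (hminimal : ∀ p, 1 ≤ p → p ≤ finrank F ↥C → isTBMD n p C → j ≤ p) :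
    ¬ isTMRD n (j - 1) C := by
  classical
  intro hMRD
  have hnpos : ∀ i, 0 < n i := fun i => lt_of_lt_of_le (by omega) (hmin i)
  have hNfr : finrank F (TSpace F n) = ∏ i, n i := by
    rw [Module.finrank_pi, Fintype.card_pi]
    simp
  have hkN : finrank F ↥C ≤ ∏ i, n i := by
    rw [← hNfr]; exact Submodule.finrank_le C
  have hCne : C ≠ ⊥ := by
    intro h
    rw [h, finrank_bot] at hjk
    omega
  have hNn0 : n 0 * (∏ s ∈ Finset.univ.erase 0, n s) = ∏ i, n i :=
    Finset.mul_prod_erase Finset.univ n (Finset.mem_univ 0)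
  have hm0pos : 0 < ∏ s ∈ Finset.univ.erase 0, n s :=
    Finset.prod_pos fun s _ => hnpos s
  have hn0N : n 0 ≤ ∏ i, n i := by
    calc n 0 = n 0 * 1 := (mul_one _).symm
    _ ≤ n 0 * (∏ s ∈ Finset.univ.erase 0, n s) := Nat.mul_le_mul_left _ hm0pos
    _ = ∏ i, n i := hNn0
  by_cases hD : dualCode C = ⊥
  · -- dual code trivial: C is 1-TBMD, contradicting minimality
    have h1 : isTBMD n 1 C := by
      unfold isTBMD
      have ht : tR n 1 (dualCode C) = (∏ i, n i) + (∏ i, n i) / n 0 := by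
        unfold tR; rw [if_pos hD]
      rw [ht]
      have hdiv : 0 < (∏ i, n i) / n 0 := Nat.div_pos hn0N (hnpos 0)
      omega
    have := hminimal 1 le_rfl (by omega) h1
    omega
  · -- main case
    have htRj : tR n j C = sInf {a | ∃ A ∈ RavagnaniAnticodes n,
        j ≤ finrank F ↥(C ⊓ A) ∧ finrank F ↥A = a} := by
      unfold tR; rw [if_neg hCne]
    have htRj' : tR n (j - 1) C = sInf {a | ∃ A ∈ RavagnaniAnticodes n,
        j - 1 ≤ finrank F ↥(C ⊓ A) ∧ finrank F ↥A = a} := by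
      unfold tR; rw [if_neg hCne]
    have htRb : tR n 1 (dualCode C) = sInf {a | ∃ A ∈ RavagnaniAnticodes n,
        1 ≤ finrank F ↥(dualCode C ⊓ A) ∧ finrank F ↥A = a} := by
      unfold tR; rw [if_neg hD]
    have hDfr : 0 < finrank F ↥(dualCode C) := by
      by_contra hc
      push_neg at hc
      exact hD (Submodule.finrank_eq_zero.1 (by omega))
    have htop : (⊤ : Submodule F (TSpace F n)) ∈ RavagnaniAnticodes n :=
      ⟨0, ⊤, rfl, (closureAnticode_top n 0).symm⟩
    have hbmem : tR n 1 (dualCode C) ∈ {a | ∃ A ∈ RavagnaniAnticodes n,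
        1 ≤ finrank F ↥(dualCode C ⊓ A) ∧ finrank F ↥A = a} := by
      rw [htRb]
      apply Nat.sInf_mem
      exact ⟨∏ i, n i, ⊤, htop, by rw [inf_top_eq]; exact hDfr,
        by rw [finrank_top, hNfr]⟩
    obtain ⟨B, hB𝒜, hB1, hBdim⟩ := hbmem
    obtain ⟨iB, U, hni, rfl⟩ := hB𝒜
    have hNiB : n iB * (∏ s ∈ Finset.univ.erase iB, n s) = ∏ i, n i :=
      Finset.mul_prod_erase Finset.univ n (Finset.mem_univ iB)
    have hdimB : finrank F ↥(closureAnticode n (Function.update (fun s => ⊤) iB U))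
        = (∏ s ∈ Finset.univ.erase iB, n s) * finrank F U :=
      finrank_closureAnticode n iB U
    have hUle : finrank F U ≤ n iB := by
      have h := Submodule.finrank_le U
      rwa [Module.finrank_pi, Fintype.card_fin] at h
    set A' := closureAnticode n (Function.update (fun s => ⊤) iB (dualCode U)) with hA'
    have hA'dim : finrank F ↥A'
        = (∏ s ∈ Finset.univ.erase iB, n s) * (n iB - finrank F U) := by
      rw [hA', finrank_closureAnticode, finrank_dualCode, Fintype.card_fin]
    have hA'N : finrank F ↥A' = (∏ i, n i)
        - finrank F ↥(closureAnticode n (Function.update (fun s => ⊤) iB U)) := by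
      rw [hA'dim, hdimB, Nat.mul_sub, ← hNiB, Nat.mul_comm (n iB)]
    -- a nonzero element of C^⊥ ⊓ B
    obtain ⟨z, hzmem, hzne⟩ :
        ∃ z, z ∈ dualCode C ⊓ closureAnticode n (Function.update (fun s => ⊤) iB U)
          ∧ z ≠ 0 := by
      apply Submodule.exists_mem_ne_zero_of_ne_bot
      intro hbot
      rw [hbot, finrank_bot] at hB1
      omega
    obtain ⟨hzC, hzB⟩ := Submodule.mem_inf.1 hzmem
    -- the hyperplane W
    set W := LinearMap.ker ((bform (F := F) (ι := ∀ s, Fin (n s))).flip z) with hW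
    have hCW : C ≤ W := by
      intro X hX
      have h := hzC X hX
      show bform X z = 0
      rw [bform_apply]
      rw [Finset.sum_congr rfl fun m _ => mul_comm (X m) (z m)]
      exact h
    have hA'W : A' ≤ W := by
      intro X hX
      show bform X z = 0
      rw [bform_apply]
      exact closureAnticode_orth n iB (dualCode U) U (fun u hu v hv => hu v hv)
        X hX z hzB
    obtain ⟨m₀, hm₀⟩ : ∃ m₀, z m₀ ≠ 0 := by
      by_contra hc; push_neg at hc; exact hzne (funext hc)
    have hrange : 0 < finrank F
        ↥(LinearMap.range ((bform (F := F) (ι := ∀ s, Fin (n s))).flip z)) := by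
      by_contra hc
      push_neg at hc
      have hbot : LinearMap.range ((bform (F := F) (ι := ∀ s, Fin (n s))).flip z) = ⊥ :=
        Submodule.finrank_eq_zero.1 (by omega)
      have hmem : bform (Pi.single m₀ 1) z
          ∈ LinearMap.range ((bform (F := F) (ι := ∀ s, Fin (n s))).flip z) :=
        ⟨Pi.single m₀ 1, rfl⟩
      rw [hbot, Submodule.mem_bot] at hmem
      apply hm₀
      rw [bform_apply] at hmem
      rw [Finset.sum_eq_single m₀ (fun m _ hne => by simp [Pi.single_eq_of_ne hne])
        (fun h => absurd (Finset.mem_univ _) h)] at hmem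
      simpa using hmem
    have hker := LinearMap.finrank_range_add_finrank_ker
      ((bform (F := F) (ι := ∀ s, Fin (n s))).flip z)
    rw [hNfr] at hker
    have hWle : finrank F ↥W ≤ (∏ i, n i) - 1 := by rw [hW]; omega
    have hsup : finrank F ↥(C ⊔ A') ≤ (∏ i, n i) - 1 :=
      le_trans (Submodule.finrank_mono (sup_le hCW hA'W)) hWle
    have hinf := Submodule.finrank_sup_add_finrank_inf_eq C A'
    have hBle : finrank F ↥(closureAnticode n (Function.update (fun s => ⊤) iB U))
        ≤ ∏ i, n i := by
      rw [← hNfr]; exact Submodule.finrank_le _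
    -- numeric bound from TMRD and non-TBMD at j-1
    have hnotTB : ¬ isTBMD n (j - 1) C := fun h => by
      have := hminimal (j - 1) (by omega) (by omega) h
      omega
    unfold isTBMD at hTB hnotTB
    rw [not_lt] at hnotTB
    unfold isTMRD at hMRD
    have hq : (∏ i, n i) / n 0 * (n 0 * (finrank F ↥C - (j - 1)) / ∏ i, n i)
        ≤ finrank F ↥C - (j - 1) := by
      rw [← hNn0, Nat.mul_div_cancel_left _ (hnpos 0),
        Nat.mul_div_mul_left _ _ (hnpos 0)]
      rw [Nat.mul_comm]
      exact Nat.div_mul_le_self _ _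
    -- conclude j ≤ dim (C ⊓ A')
    have hjle : j ≤ finrank F ↥(C ⊓ A') := by omega
    have htle : tR n j C ≤ (∏ i, n i)
        - finrank F ↥(closureAnticode n (Function.update (fun s => ⊤) iB U)) := by
      rw [htRj]
      exact Nat.sInf_le ⟨A', ⟨iB, dualCode U, hni, rfl⟩, hjle, hA'N⟩
    omega

/-- If `C` is minimally `j`-TBMD w.r.t. `𝒜^R` (with `j ∈ {2,…,k}`), then `C` is not
`(j−1)`-TMRD w.r.t. `𝒜^R`. -/
theorem stmt8 {F : Type*} [Field F] [Fintype F] (r : ℕ) (n : Fin (r + 2) → ℕ)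
    (hn1 : 2 ≤ n 0) (hmin : ∀ i, n 0 ≤ n i) (hmax : ∀ i, n i ≤ n (Fin.last (r + 1)))
    (C : Submodule F (TSpace F n)) (j : ℕ) (hj2 : 2 ≤ j) (hjk : j ≤ finrank F ↥C)
    (hTB : isTBMD n j C)
    (hminimal : ∀ p, 1 ≤ p → p ≤ finrank F ↥C → isTBMD n p C → j ≤ p) :
    ¬ isTMRD n (j - 1) C :=
  stmt8_main r n hn1 hmin hmax C j hj2 hjk hTB hminimal

end TensorPaper
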